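/- arXiv:2308.14309 — 4 statements merged into one kernel-verified Lean document; each statement's English description precedes it below -/
import Mathlib

section
/- If Y is a nonempty finite subset of the unit sphere S³ ⊆ ℝ⁴ that is a spherical {10,4,2}-design, i.e., ∑_{y∈Y} P(y) = 0 for every harmonic polynomial P of degree ℓ for each ℓ ∈ {10, 4, 2}, then |Y| ≥ 12. -/
open MvPolynomial

/-- A polynomial `P ∈ ℝ[x₁,…,x_d]` is *harmonic of degree `ℓ`* if it is homogeneous of
degree `ℓ` and is annihilated by the Laplacian `∑ⱼ ∂²/∂xⱼ²`. -/
def IsHarmonic {d : ℕ} (ℓ : ℕ) (P : MvPolynomial (Fin d) ℝ) : Prop :=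
  P.IsHomogeneous ℓ ∧ ∑ j : Fin d, pderiv j (pderiv j P) = 0

namespace Sph1042

noncomputable def L (z : Fin 4 → ℝ) : MvPolynomial (Fin 4) ℝ := ∑ i, C (z i) * X i
noncomputable def Q : MvPolynomial (Fin 4) ℝ := ∑ i : Fin 4, X i * X i

lemma pd_L (z : Fin 4 → ℝ) (j : Fin 4) : pderiv j (L z) = C (z j) := by
  classical
  simp [L, pderiv_C_mul, pderiv_X, Pi.single_apply, mul_ite, Finset.sum_ite_eq']

lemma pd_Q (j : Fin 4) : pderiv j Q = X j + X j := by
  classical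
  simp [Q, pderiv_mul, pderiv_X, Pi.single_apply, mul_ite, ite_mul, Finset.sum_ite_eq',
    Finset.sum_add_distrib]

lemma sum_CzCz {z : Fin 4 → ℝ} (hz : ∑ i, z i ^ 2 = 1) :
    ∑ j : Fin 4, (C (z j) * C (z j) : MvPolynomial (Fin 4) ℝ) = 1 := by
  have : ∑ j : Fin 4, (C (z j) * C (z j) : MvPolynomial (Fin 4) ℝ)
      = C (∑ j : Fin 4, z j ^ 2) := by
    rw [map_sum]
    refine Finset.sum_congr rfl fun j _ => by rw [← C_mul, sq]
  rw [this, hz, C_1]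

lemma lap_eq (z : Fin 4 → ℝ) (hz : ∑ i, z i ^ 2 = 1)
    (P A B D E : MvPolynomial (Fin 4) ℝ)
    (h : ∀ j : Fin 4, pderiv j (pderiv j P) =
      A * (C (z j) * C (z j)) + B * (C (z j) * X j) + D * (X j * X j) + E) :
    ∑ j : Fin 4, pderiv j (pderiv j P) = A + B * L z + D * Q + E * 4 := by
  simp only [h, Finset.sum_add_distrib, ← Finset.mul_sum, sum_CzCz hz]
  simp only [Finset.sum_const, Finset.card_univ, Fintype.card_fin, nsmul_eq_mul]
  rw [L, Q]
  ring

noncomputable def H2 (z : Fin 4 → ℝ) : MvPolynomial (Fin 4) ℝ := C 4 * L z ^ 2 - Q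

noncomputable def H4 (z : Fin 4 → ℝ) : MvPolynomial (Fin 4) ℝ :=
  C 16 * L z ^ 4 - C 12 * L z ^ 2 * Q + Q ^ 2

noncomputable def H10 (z : Fin 4 → ℝ) : MvPolynomial (Fin 4) ℝ :=
  C 1024 * L z ^ 10 - C 2304 * L z ^ 8 * Q + C 1792 * L z ^ 6 * Q ^ 2
    - C 560 * L z ^ 4 * Q ^ 3 + C 60 * L z ^ 2 * Q ^ 4 - Q ^ 5

lemma hom_L (z : Fin 4 → ℝ) : (L z).IsHomogeneous 1 := by
  refine IsHomogeneous.sum _ _ _ fun i _ => ?_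
  simpa using (isHomogeneous_C (Fin 4) (z i)).mul (isHomogeneous_X ℝ i)

lemma hom_Q : (Q : MvPolynomial (Fin 4) ℝ).IsHomogeneous 2 := by
  refine IsHomogeneous.sum _ _ _ fun i _ => ?_
  simpa using (isHomogeneous_X ℝ i).mul (isHomogeneous_X ℝ i)

lemma hom_H2 (z : Fin 4 → ℝ) : (H2 z).IsHomogeneous 2 := by
  refine IsHomogeneous.sub ?_ hom_Q
  simpa using ((isHomogeneous_C (Fin 4) (4:ℝ)).mul ((hom_L z).pow 2))

lemma hom_H4 (z : Fin 4 → ℝ) : (H4 z).IsHomogeneous 4 := by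
  refine IsHomogeneous.add (IsHomogeneous.sub ?_ ?_) ?_
  · simpa using ((isHomogeneous_C (Fin 4) (16:ℝ)).mul ((hom_L z).pow 4))
  · simpa using (((isHomogeneous_C (Fin 4) (12:ℝ)).mul ((hom_L z).pow 2)).mul hom_Q)
  · simpa using hom_Q.pow 2

lemma hom_H10 (z : Fin 4 → ℝ) : (H10 z).IsHomogeneous 10 := by
  refine IsHomogeneous.sub (IsHomogeneous.add (IsHomogeneous.sub (IsHomogeneous.add
    (IsHomogeneous.sub ?_ ?_) ?_) ?_) ?_) ?_
  · simpa using ((isHomogeneous_C (Fin 4) (1024:ℝ)).mul ((hom_L z).pow 10))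
  · simpa using (((isHomogeneous_C (Fin 4) (2304:ℝ)).mul ((hom_L z).pow 8)).mul hom_Q)
  · simpa using (((isHomogeneous_C (Fin 4) (1792:ℝ)).mul ((hom_L z).pow 6)).mul (hom_Q.pow 2))
  · simpa using (((isHomogeneous_C (Fin 4) (560:ℝ)).mul ((hom_L z).pow 4)).mul (hom_Q.pow 3))
  · simpa using (((isHomogeneous_C (Fin 4) (60:ℝ)).mul ((hom_L z).pow 2)).mul (hom_Q.pow 4))
  · simpa using hom_Q.pow 5

@[simp] lemma pd_nat (j : Fin 4) (n : ℕ) [n.AtLeastTwo] :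
    pderiv j (no_index (OfNat.ofNat n) : MvPolynomial (Fin 4) ℝ) = 0 := by
  rw [← map_ofNat (C : ℝ →+* MvPolynomial (Fin 4) ℝ) n, pderiv_C]

@[simp] lemma pd_natCast (j : Fin 4) (n : ℕ) :
    pderiv j (n : MvPolynomial (Fin 4) ℝ) = 0 := by
  rw [← map_natCast (C : ℝ →+* MvPolynomial (Fin 4) ℝ) n, pderiv_C]

lemma harm_H2 {z : Fin 4 → ℝ} (hz : ∑ i, z i ^ 2 = 1) : IsHarmonic 2 (H2 z) := by
  refine ⟨hom_H2 z, ?_⟩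
  have hj : ∀ j : Fin 4, pderiv j (pderiv j (H2 z)) =
      8 * (C (z j) * C (z j)) + 0 * (C (z j) * X j) + 0 * (X j * X j) + (-2) := by
    intro j
    simp only [H2, map_sub, map_add, pderiv_C_mul, pderiv_mul, pderiv_pow, pd_L, pd_Q,
      pderiv_C, pd_nat, pd_natCast, pderiv_X_self, pderiv_one, map_zero, Nat.cast_ofNat, map_ofNat]
    ring
  rw [lap_eq z hz (H2 z) 8 0 0 (-2) hj]
  ring

lemma harm_H4 {z : Fin 4 → ℝ} (hz : ∑ i, z i ^ 2 = 1) : IsHarmonic 4 (H4 z) := by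
  refine ⟨hom_H4 z, ?_⟩
  have hj : ∀ j : Fin 4, pderiv j (pderiv j (H4 z)) =
      (192 * L z ^ 2 - 24 * Q) * (C (z j) * C (z j)) + (-96 * L z) * (C (z j) * X j)
        + 8 * (X j * X j) + (-24 * L z ^ 2 + 4 * Q) := by
    intro j
    simp only [H4, map_sub, map_add, pderiv_C_mul, pderiv_mul, pderiv_pow, pd_L, pd_Q,
      pderiv_C, pd_nat, pd_natCast, pderiv_X_self, pderiv_one, map_zero, Nat.cast_ofNat, map_ofNat]
    ring
  rw [lap_eq z hz (H4 z) _ _ _ _ hj]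
  ring

lemma harm_H10 {z : Fin 4 → ℝ} (hz : ∑ i, z i ^ 2 = 1) : IsHarmonic 10 (H10 z) := by
  refine ⟨hom_H10 z, ?_⟩
  have hj : ∀ j : Fin 4, pderiv j (pderiv j (H10 z)) =
      (92160 * L z ^ 8 - 129024 * L z ^ 6 * Q + 53760 * L z ^ 4 * Q ^ 2
          - 6720 * L z ^ 2 * Q ^ 3 + 120 * Q ^ 4) * (C (z j) * C (z j))
        + (-73728 * L z ^ 7 + 86016 * L z ^ 5 * Q - 26880 * L z ^ 3 * Q ^ 2
          + 1920 * L z * Q ^ 3) * (C (z j) * X j)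
        + (14336 * L z ^ 6 - 13440 * L z ^ 4 * Q + 2880 * L z ^ 2 * Q ^ 2
          - 80 * Q ^ 3) * (X j * X j)
        + (-4608 * L z ^ 8 + 7168 * L z ^ 6 * Q - 3360 * L z ^ 4 * Q ^ 2
          + 480 * L z ^ 2 * Q ^ 3 - 10 * Q ^ 4) := by
    intro j
    simp only [H10, map_sub, map_add, pderiv_C_mul, pderiv_mul, pderiv_pow, pd_L, pd_Q,
      pderiv_C, pd_nat, pd_natCast, pderiv_X_self, pderiv_one, map_zero, Nat.cast_ofNat, map_ofNat]
    ring
  rw [lap_eq z hz (H10 z) _ _ _ _ hj]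
  ring

lemma eval_L (z y : Fin 4 → ℝ) : eval y (L z) = ∑ i, z i * y i := by
  simp [L]

lemma eval_Q (y : Fin 4 → ℝ) : eval y Q = ∑ i, y i * y i := by
  simp [Q]

lemma eval_H2 (z y : Fin 4 → ℝ) (hy : ∑ i, y i * y i = 1) :
    eval y (H2 z) = 4 * (∑ i, z i * y i) ^ 2 - 1 := by
  simp [H2, eval_L, eval_Q, hy]

lemma eval_H4 (z y : Fin 4 → ℝ) (hy : ∑ i, y i * y i = 1) :
    eval y (H4 z) = 16 * (∑ i, z i * y i) ^ 4 - 12 * (∑ i, z i * y i) ^ 2 + 1 := by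
  simp [H4, eval_L, eval_Q, hy]

lemma eval_H10 (z y : Fin 4 → ℝ) (hy : ∑ i, y i * y i = 1) :
    eval y (H10 z) = 1024 * (∑ i, z i * y i) ^ 10 - 2304 * (∑ i, z i * y i) ^ 8
      + 1792 * (∑ i, z i * y i) ^ 6 - 560 * (∑ i, z i * y i) ^ 4
      + 60 * (∑ i, z i * y i) ^ 2 - 1 := by
  simp [H10, eval_L, eval_Q, hy]

lemma sum2_add (Y : Finset (EuclideanSpace ℝ (Fin 4)))
    (F G : EuclideanSpace ℝ (Fin 4) → EuclideanSpace ℝ (Fin 4) → ℝ) :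
    ∑ x ∈ Y, ∑ y ∈ Y, (F x y + G x y)
      = (∑ x ∈ Y, ∑ y ∈ Y, F x y) + ∑ x ∈ Y, ∑ y ∈ Y, G x y := by
  rw [← Finset.sum_add_distrib]
  exact Finset.sum_congr rfl fun x _ => Finset.sum_add_distrib

lemma sum2_mul (Y : Finset (EuclideanSpace ℝ (Fin 4))) (c : ℝ)
    (F : EuclideanSpace ℝ (Fin 4) → EuclideanSpace ℝ (Fin 4) → ℝ) :
    ∑ x ∈ Y, ∑ y ∈ Y, c * F x y = c * ∑ x ∈ Y, ∑ y ∈ Y, F x y := by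
  simp [Finset.mul_sum]

end Sph1042

open Sph1042

/-- If `Y` is a nonempty finite subset of the unit sphere `S³ ⊆ ℝ⁴` that is
a spherical `{10,4,2}`-design, then `|Y| ≥ 12`. -/
theorem lower_bound_for_spherical_10_4_2_designs (Y : Finset (EuclideanSpace ℝ (Fin 4)))
    (hne : Y.Nonempty)
    (hsphere : ∀ y ∈ Y, ‖y‖ = 1)
    (hdesign : ∀ ℓ ∈ ({10, 4, 2} : Set ℕ), ∀ P : MvPolynomial (Fin 4) ℝ, IsHarmonic ℓ P →
      ∑ y ∈ Y, eval (fun i => y i) P = 0) :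
    12 ≤ Y.card := by
  classical
  have hy1 : ∀ x ∈ Y, ∑ i, x i * x i = 1 := by
    intro x hx
    have h := hsphere x hx
    rw [EuclideanSpace.norm_eq] at h
    have h2 : ∑ i, x i * x i = ∑ i, ‖x i‖ ^ 2 := by
      refine Finset.sum_congr rfl fun i _ => ?_
      rw [Real.norm_eq_abs, sq_abs, sq]
    rw [h2]
    exact Real.sqrt_eq_one.mp h
  have hz1 : ∀ x ∈ Y, ∑ i, (fun i => x i) i ^ 2 = 1 := by
    intro x hx
    have := hy1 x hx
    simpa [sq] using this
  set n : ℕ := Y.card with hn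
  -- the three design identities
  have E2 : ∑ x ∈ Y, ∑ y ∈ Y, (4 * (∑ i, x i * y i) ^ 2 - 1) = 0 := by
    refine Finset.sum_eq_zero fun x hx => ?_
    have h0 := hdesign 2 (by simp) _ (harm_H2 (hz1 x hx))
    rw [← h0]
    refine Finset.sum_congr rfl fun y hy => ?_
    rw [eval_H2 (fun i => x i) (fun i => y i) (hy1 y hy)]
  have E4 : ∑ x ∈ Y, ∑ y ∈ Y,
      (16 * (∑ i, x i * y i) ^ 4 - 12 * (∑ i, x i * y i) ^ 2 + 1) = 0 := by
    refine Finset.sum_eq_zero fun x hx => ?_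
    have h0 := hdesign 4 (by simp) _ (harm_H4 (hz1 x hx))
    rw [← h0]
    refine Finset.sum_congr rfl fun y hy => ?_
    rw [eval_H4 (fun i => x i) (fun i => y i) (hy1 y hy)]
  have E10 : ∑ x ∈ Y, ∑ y ∈ Y,
      (1024 * (∑ i, x i * y i) ^ 10 - 2304 * (∑ i, x i * y i) ^ 8
        + 1792 * (∑ i, x i * y i) ^ 6 - 560 * (∑ i, x i * y i) ^ 4
        + 60 * (∑ i, x i * y i) ^ 2 - 1) = 0 := by
    refine Finset.sum_eq_zero fun x hx => ?_
    have h0 := hdesign 10 (by simp) _ (harm_H10 (hz1 x hx))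
    rw [← h0]
    refine Finset.sum_congr rfl fun y hy => ?_
    rw [eval_H10 (fun i => x i) (fun i => y i) (hy1 y hy)]
  -- the key positive-definite combination
  have key : ∑ x ∈ Y, ∑ y ∈ Y, (4 * (∑ i, x i * y i) ^ 2 *
      (128 * (∑ i, x i * y i) ^ 4 - 144 * (∑ i, x i * y i) ^ 2 + 31) ^ 2)
      = 81 * (n : ℝ) ^ 2 := by
    have expand : ∑ x ∈ Y, ∑ y ∈ Y, (4 * (∑ i, x i * y i) ^ 2 *
        (128 * (∑ i, x i * y i) ^ 4 - 144 * (∑ i, x i * y i) ^ 2 + 31) ^ 2)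
        = ∑ x ∈ Y, ∑ y ∈ Y, ((81 : ℝ) +
            (25 * (4 * (∑ i, x i * y i) ^ 2 - 1) +
            (8 * (16 * (∑ i, x i * y i) ^ 4 - 12 * (∑ i, x i * y i) ^ 2 + 1) +
            64 * (1024 * (∑ i, x i * y i) ^ 10 - 2304 * (∑ i, x i * y i) ^ 8
              + 1792 * (∑ i, x i * y i) ^ 6 - 560 * (∑ i, x i * y i) ^ 4
              + 60 * (∑ i, x i * y i) ^ 2 - 1)))) :=
      Finset.sum_congr rfl fun x _ => Finset.sum_congr rfl fun y _ => by ring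
    rw [expand, sum2_add, sum2_add, sum2_add, sum2_mul, sum2_mul, sum2_mul, E2, E4, E10]
    simp only [Finset.sum_const, nsmul_eq_mul, ← hn]
    ring
  -- diagonal lower bound
  have diag : (900 : ℝ) * n ≤ ∑ x ∈ Y, ∑ y ∈ Y, (4 * (∑ i, x i * y i) ^ 2 *
      (128 * (∑ i, x i * y i) ^ 4 - 144 * (∑ i, x i * y i) ^ 2 + 31) ^ 2) := by
    have hstep : ∀ x ∈ Y, (900 : ℝ) ≤ ∑ y ∈ Y, (4 * (∑ i, x i * y i) ^ 2 *
        (128 * (∑ i, x i * y i) ^ 4 - 144 * (∑ i, x i * y i) ^ 2 + 31) ^ 2) := by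
      intro x hx
      have hxx : (4 : ℝ) * (∑ i, x i * x i) ^ 2 *
          (128 * (∑ i, x i * x i) ^ 4 - 144 * (∑ i, x i * x i) ^ 2 + 31) ^ 2 = 900 := by
        rw [hy1 x hx]; norm_num
      calc (900 : ℝ) = 4 * (∑ i, x i * x i) ^ 2 *
          (128 * (∑ i, x i * x i) ^ 4 - 144 * (∑ i, x i * x i) ^ 2 + 31) ^ 2 := hxx.symm
        _ ≤ _ := Finset.single_le_sum
            (f := fun y => 4 * (∑ i, x i * y i) ^ 2 *
              (128 * (∑ i, x i * y i) ^ 4 - 144 * (∑ i, x i * y i) ^ 2 + 31) ^ 2)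
            (fun y _ => mul_nonneg (mul_nonneg (by norm_num) (sq_nonneg _)) (sq_nonneg _)) hx
    calc (900 : ℝ) * n = ∑ _x ∈ Y, (900 : ℝ) := by
          rw [Finset.sum_const, nsmul_eq_mul, ← hn]; ring
      _ ≤ _ := Finset.sum_le_sum hstep
  have hcard : 1 ≤ n := hne.card_pos
  have hnR : (1 : ℝ) ≤ (n : ℝ) := by exact_mod_cast hcard
  have hfin : (900 : ℝ) * n ≤ 81 * (n : ℝ) ^ 2 := key ▸ diag
  have h9 : (100 : ℝ) ≤ 9 * (n : ℝ) := by nlinarith [hfin, hnR]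
  have h9' : (100 : ℕ) ≤ 9 * n := by exact_mod_cast h9
  omega
end

section
/- Let Y be a nonempty finite subset of the unit sphere S³ ⊆ ℝ⁴ that is a spherical {10,4,2}-design. Then |Y| = 12 (i.e., Y attains the lower bound for such designs) if and only if A(Y) ⊆ {−1/2, 0, 1/2}, that is, if and only if the Euclidean inner product ⟨y, y′⟩ of any two distinct points y, y′ ∈ Y lies in {−1/2, 0, 1/2}. -/
open MvPolynomial

noncomputable def sP (c : Fin 4 → ℝ) : MvPolynomial (Fin 4) ℝ := ∑ i, C (c i) * X i
noncomputable def rP : MvPolynomial (Fin 4) ℝ := ∑ i : Fin 4, X i ^ 2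

lemma pderiv_sP (c : Fin 4 → ℝ) (j : Fin 4) : pderiv j (sP c) = C (c j) := by
  simp [sP, pderiv_X, Pi.single_apply]

lemma pderiv_rP (j : Fin 4) : pderiv j rP = C 2 * X j := by
  simp [rP, pderiv_pow, pderiv_X, Pi.single_apply]
  rw [← map_ofNat (C : ℝ →+* MvPolynomial (Fin 4) ℝ) 2]

lemma pderiv_pow' {j : Fin 4} {f : MvPolynomial (Fin 4) ℝ} {n : ℕ} :
    pderiv j (f ^ n) = C (n : ℝ) * f ^ (n - 1) * pderiv j f := by
  rw [pderiv_pow, map_natCast (C : ℝ →+* MvPolynomial (Fin 4) ℝ)]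

lemma sum_C_sq (c : Fin 4 → ℝ) (hc : ∑ i, c i ^ 2 = 1) :
    ∑ j : Fin 4, (C (c j) : MvPolynomial (Fin 4) ℝ) ^ 2 = 1 := by
  have : ∑ j : Fin 4, (C (c j) : MvPolynomial (Fin 4) ℝ) ^ 2
      = C (∑ i, c i ^ 2) := by simp [C_pow]
  rw [this, hc, map_one]

lemma sP_homog (c : Fin 4 → ℝ) : (sP c).IsHomogeneous 1 := by
  apply IsHomogeneous.sum
  intro i _
  simpa using (isHomogeneous_C _ (c i)).mul (isHomogeneous_X ℝ i)

lemma rP_homog : rP.IsHomogeneous 2 := by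
  apply IsHomogeneous.sum
  intro i _
  simpa using (isHomogeneous_X ℝ i).pow 2

noncomputable def Q2 (c : Fin 4 → ℝ) : MvPolynomial (Fin 4) ℝ := C 4 * sP c ^ 2 - rP

noncomputable def Q4 (c : Fin 4 → ℝ) : MvPolynomial (Fin 4) ℝ :=
  C 16 * sP c ^ 4 - C 12 * sP c ^ 2 * rP + rP ^ 2

noncomputable def Q10 (c : Fin 4 → ℝ) : MvPolynomial (Fin 4) ℝ :=
  C 1024 * sP c ^ 10 - C 2304 * sP c ^ 8 * rP + C 1792 * sP c ^ 6 * rP ^ 2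
    - C 560 * sP c ^ 4 * rP ^ 3 + C 60 * sP c ^ 2 * rP ^ 4 - rP ^ 5

lemma Q2_harmonic (c : Fin 4 → ℝ) (hc : ∑ i, c i ^ 2 = 1) : IsHarmonic 2 (Q2 c) := by
  constructor
  · apply IsHomogeneous.sub
    · simpa using (isHomogeneous_C _ (4 : ℝ)).mul ((sP_homog c).pow 2)
    · exact rP_homog
  · have key : ∀ j : Fin 4, pderiv j (pderiv j (Q2 c)) =
        C 8 * (C (c j)) ^ 2 + (- C 2) := by
      intro j
      simp only [Q2, map_sub, map_add, pderiv_mul, pderiv_pow', pderiv_sP, pderiv_rP, pderiv_C,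
        pderiv_X_self, map_zero]
      norm_num [map_ofNat, map_one, Nat.cast_ofNat]
      ring
    rw [Finset.sum_congr rfl (fun j _ => key j)]
    simp only [Finset.sum_add_distrib, ← Finset.mul_sum, Finset.sum_const, Finset.card_univ,
      Fintype.card_fin, nsmul_eq_mul]
    rw [sum_C_sq c hc]
    simp only [map_ofNat]
    ring

lemma Q4_harmonic (c : Fin 4 → ℝ) (hc : ∑ i, c i ^ 2 = 1) : IsHarmonic 4 (Q4 c) := by
  constructor
  · apply IsHomogeneous.add
    apply IsHomogeneous.sub
    · simpa using (isHomogeneous_C _ (16 : ℝ)).mul ((sP_homog c).pow 4)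
    · simpa using ((isHomogeneous_C _ (12 : ℝ)).mul ((sP_homog c).pow 2)).mul rP_homog
    · simpa using rP_homog.pow 2
  · have key : ∀ j : Fin 4, pderiv j (pderiv j (Q4 c)) =
        (C 192 * sP c ^ 2 - C 24 * rP) * (C (c j)) ^ 2
        + (- C 96 * sP c) * (C (c j) * X j)
        + C 8 * (X j) ^ 2
        + (- C 24 * sP c ^ 2 + C 4 * rP) := by
      intro j
      simp only [Q4, map_sub, map_add, pderiv_mul, pderiv_pow', pderiv_sP, pderiv_rP, pderiv_C,
        pderiv_X_self, map_zero]
      norm_num [map_ofNat, map_one, Nat.cast_ofNat]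
      ring
    rw [Finset.sum_congr rfl (fun j _ => key j)]
    simp only [Finset.sum_add_distrib, ← Finset.mul_sum, Finset.sum_const, Finset.card_univ,
      Fintype.card_fin, nsmul_eq_mul]
    rw [sum_C_sq c hc, show ∑ j : Fin 4, C (c j) * X j = sP c from rfl,
      show ∑ j : Fin 4, (X j : MvPolynomial (Fin 4) ℝ) ^ 2 = rP from rfl]
    simp only [map_ofNat]
    ring

lemma Q10_harmonic (c : Fin 4 → ℝ) (hc : ∑ i, c i ^ 2 = 1) : IsHarmonic 10 (Q10 c) := by
  constructor
  · apply IsHomogeneous.sub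
    apply IsHomogeneous.add
    apply IsHomogeneous.sub
    apply IsHomogeneous.add
    apply IsHomogeneous.sub
    · simpa using (isHomogeneous_C _ (1024 : ℝ)).mul ((sP_homog c).pow 10)
    · simpa using ((isHomogeneous_C _ (2304 : ℝ)).mul ((sP_homog c).pow 8)).mul rP_homog
    · simpa using ((isHomogeneous_C _ (1792 : ℝ)).mul ((sP_homog c).pow 6)).mul (rP_homog.pow 2)
    · simpa using ((isHomogeneous_C _ (560 : ℝ)).mul ((sP_homog c).pow 4)).mul (rP_homog.pow 3)
    · simpa using ((isHomogeneous_C _ (60 : ℝ)).mul ((sP_homog c).pow 2)).mul (rP_homog.pow 4)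
    · simpa using rP_homog.pow 5
  · have key : ∀ j : Fin 4, pderiv j (pderiv j (Q10 c)) =
        (C 92160 * sP c ^ 8 - C 129024 * sP c ^ 6 * rP + C 53760 * sP c ^ 4 * rP ^ 2
          - C 6720 * sP c ^ 2 * rP ^ 3 + C 120 * rP ^ 4) * (C (c j)) ^ 2
        + (- C 73728 * sP c ^ 7 + C 86016 * sP c ^ 5 * rP - C 26880 * sP c ^ 3 * rP ^ 2
          + C 1920 * sP c * rP ^ 3) * (C (c j) * X j)
        + (C 14336 * sP c ^ 6 - C 13440 * sP c ^ 4 * rP + C 2880 * sP c ^ 2 * rP ^ 2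
          - C 80 * rP ^ 3) * (X j) ^ 2
        + (- C 4608 * sP c ^ 8 + C 7168 * sP c ^ 6 * rP - C 3360 * sP c ^ 4 * rP ^ 2
          + C 480 * sP c ^ 2 * rP ^ 3 - C 10 * rP ^ 4) := by
      intro j
      simp only [Q10, map_sub, map_add, pderiv_mul, pderiv_pow', pderiv_sP, pderiv_rP, pderiv_C,
        pderiv_X_self, map_zero]
      norm_num [map_ofNat, map_one, Nat.cast_ofNat]
      ring
    rw [Finset.sum_congr rfl (fun j _ => key j)]
    simp only [Finset.sum_add_distrib, ← Finset.mul_sum, Finset.sum_const, Finset.card_univ,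
      Fintype.card_fin, nsmul_eq_mul]
    rw [sum_C_sq c hc, show ∑ j : Fin 4, C (c j) * X j = sP c from rfl,
      show ∑ j : Fin 4, (X j : MvPolynomial (Fin 4) ℝ) ^ 2 = rP from rfl]
    simp only [map_ofNat]
    ring

lemma eval_sP (c x : Fin 4 → ℝ) : eval x (sP c) = ∑ i, c i * x i := by simp [sP]

lemma eval_rP (x : Fin 4 → ℝ) : eval x rP = ∑ i, x i ^ 2 := by simp [rP]

lemma eval_Q2 (c x : Fin 4 → ℝ) (hx : ∑ i, x i ^ 2 = 1) :
    eval x (Q2 c) = 4 * (∑ i, c i * x i) ^ 2 - 1 := by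
  simp [Q2, eval_sP, eval_rP, hx]

lemma eval_Q4 (c x : Fin 4 → ℝ) (hx : ∑ i, x i ^ 2 = 1) :
    eval x (Q4 c) = 16 * (∑ i, c i * x i) ^ 4 - 12 * (∑ i, c i * x i) ^ 2 + 1 := by
  simp [Q4, eval_sP, eval_rP, hx]

lemma eval_Q10 (c x : Fin 4 → ℝ) (hx : ∑ i, x i ^ 2 = 1) :
    eval x (Q10 c) = 1024 * (∑ i, c i * x i) ^ 10 - 2304 * (∑ i, c i * x i) ^ 8
      + 1792 * (∑ i, c i * x i) ^ 6 - 560 * (∑ i, c i * x i) ^ 4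
      + 60 * (∑ i, c i * x i) ^ 2 - 1 := by
  simp [Q10, eval_sP, eval_rP, hx]

/-- The LP polynomial. -/
noncomputable def Fp (t : ℝ) : ℝ :=
  1024 * t ^ 10 - 2304 * t ^ 8 + 1792 * t ^ 6 - 528 * t ^ 4 + 52 * t ^ 2

lemma Fp_nonneg (t : ℝ) : 0 ≤ Fp t := by
  have h : Fp t = 4 * t ^ 2 * (4 * t ^ 2 - 1) ^ 2 * ((4 * t ^ 2 - 7 / 2) ^ 2 + 3 / 4) := by
    unfold Fp; ring
  rw [h]; positivity

lemma Fp_eq_zero_iff (t : ℝ) : Fp t = 0 ↔ t = 0 ∨ t = 1 / 2 ∨ t = -(1 / 2) := by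
  have h : Fp t = 4 * t ^ 2 * (4 * t ^ 2 - 1) ^ 2 * ((4 * t ^ 2 - 7 / 2) ^ 2 + 3 / 4) := by
    unfold Fp; ring
  constructor
  · intro h0
    rw [h] at h0
    rcases mul_eq_zero.1 h0 with h1 | h1
    · rcases mul_eq_zero.1 h1 with h2 | h2
      · left
        have ht2 : t ^ 2 = 0 := by linarith [mul_eq_zero.1 h2]
        nlinarith [sq_nonneg t]
      · have h4 : 4 * t ^ 2 - 1 = 0 := by
          have := pow_eq_zero_iff (n := 2) (by norm_num) |>.1 h2
          linarith
        have h5 : (2 * t - 1) * (2 * t + 1) = 0 := by nlinarith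
        rcases mul_eq_zero.1 h5 with h6 | h6
        · right; left; linarith
        · right; right; linarith
    · nlinarith [sq_nonneg (4 * t ^ 2 - 7 / 2)]
  · rintro (rfl | rfl | rfl) <;> (unfold Fp; norm_num)

/-- A nonempty finite spherical `{10,4,2}`-design `Y ⊆ S³` attains the lower
bound `|Y| = 12` if and only if the inner product of any two distinct points of `Y` lies in
`{−1/2, 0, 1/2}` (i.e. `A(Y) ⊆ {−1/2, 0, 1/2}`). -/
theorem tight_design_iff_inner_products (Y : Finset (EuclideanSpace ℝ (Fin 4)))
    (hne : Y.Nonempty)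
    (hsphere : ∀ y ∈ Y, ‖y‖ = 1)
    (hdesign : ∀ ℓ ∈ ({10, 4, 2} : Set ℕ), ∀ P : MvPolynomial (Fin 4) ℝ, IsHarmonic ℓ P →
      ∑ y ∈ Y, eval (fun i => y i) P = 0) :
    Y.card = 12 ↔
      ∀ x ∈ Y, ∀ y ∈ Y, x ≠ y → (∑ i, x i * y i) ∈ ({-(1/2), 0, 1/2} : Set ℝ) := by
  classical
  -- unit vectors
  have hunit : ∀ y ∈ Y, ∑ i, (y i) ^ 2 = 1 := by
    intro y hy
    have h := hsphere y hy
    rw [EuclideanSpace.norm_eq] at h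
    rw [Real.sqrt_eq_one] at h
    simpa [Real.norm_eq_abs, sq_abs] using h
  set N := Y.card with hN
  -- for each fixed y in Y, the full sum of Fp over x in Y equals 3 * N
  have key : ∀ y ∈ Y, ∑ x ∈ Y, Fp (∑ i, x i * y i) = 3 * N := by
    intro y hy
    have hcy : ∑ i, (y i) ^ 2 = 1 := hunit y hy
    have e2 : ∑ x ∈ Y, (4 * (∑ i, (y i) * x i) ^ 2 - 1) = 0 := by
      have := hdesign 2 (by norm_num) (Q2 (fun i => y i)) (Q2_harmonic _ hcy)
      calc ∑ x ∈ Y, (4 * (∑ i, (y i) * x i) ^ 2 - 1)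
          = ∑ x ∈ Y, eval (fun i => x i) (Q2 (fun i => y i)) :=
            Finset.sum_congr rfl fun x hx => (eval_Q2 _ _ (hunit x hx)).symm
        _ = 0 := this
    have e4 : ∑ x ∈ Y, (16 * (∑ i, (y i) * x i) ^ 4 - 12 * (∑ i, (y i) * x i) ^ 2 + 1) = 0 := by
      have := hdesign 4 (by norm_num) (Q4 (fun i => y i)) (Q4_harmonic _ hcy)
      calc ∑ x ∈ Y, (16 * (∑ i, (y i) * x i) ^ 4 - 12 * (∑ i, (y i) * x i) ^ 2 + 1)
          = ∑ x ∈ Y, eval (fun i => x i) (Q4 (fun i => y i)) :=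
            Finset.sum_congr rfl fun x hx => (eval_Q4 _ _ (hunit x hx)).symm
        _ = 0 := this
    have e10 : ∑ x ∈ Y, (1024 * (∑ i, (y i) * x i) ^ 10 - 2304 * (∑ i, (y i) * x i) ^ 8
        + 1792 * (∑ i, (y i) * x i) ^ 6 - 560 * (∑ i, (y i) * x i) ^ 4
        + 60 * (∑ i, (y i) * x i) ^ 2 - 1) = 0 := by
      have := hdesign 10 (by norm_num) (Q10 (fun i => y i)) (Q10_harmonic _ hcy)
      calc ∑ x ∈ Y, (1024 * (∑ i, (y i) * x i) ^ 10 - 2304 * (∑ i, (y i) * x i) ^ 8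
            + 1792 * (∑ i, (y i) * x i) ^ 6 - 560 * (∑ i, (y i) * x i) ^ 4
            + 60 * (∑ i, (y i) * x i) ^ 2 - 1)
          = ∑ x ∈ Y, eval (fun i => x i) (Q10 (fun i => y i)) :=
            Finset.sum_congr rfl fun x hx => (eval_Q10 _ _ (hunit x hx)).symm
        _ = 0 := this
    have expand : ∀ x : EuclideanSpace ℝ (Fin 4), Fp (∑ i, x i * y i)
        = 3 + 4 * (4 * (∑ i, (y i) * x i) ^ 2 - 1)
          + 2 * (16 * (∑ i, (y i) * x i) ^ 4 - 12 * (∑ i, (y i) * x i) ^ 2 + 1)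
          + (1024 * (∑ i, (y i) * x i) ^ 10 - 2304 * (∑ i, (y i) * x i) ^ 8
            + 1792 * (∑ i, (y i) * x i) ^ 6 - 560 * (∑ i, (y i) * x i) ^ 4
            + 60 * (∑ i, (y i) * x i) ^ 2 - 1) := by
      intro x
      have hsymm : (∑ i, x i * y i) = ∑ i, (y i) * x i := by
        exact Finset.sum_congr rfl fun i _ => mul_comm _ _
      rw [hsymm]; unfold Fp; ring
    rw [Finset.sum_congr rfl fun x _ => expand x]
    rw [Finset.sum_add_distrib, Finset.sum_add_distrib, Finset.sum_add_distrib,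
      ← Finset.mul_sum, ← Finset.mul_sum, e2, e4, e10, Finset.sum_const, nsmul_eq_mul]
    ring
  -- decompose into diagonal + off-diagonal
  have key2 : ∀ y ∈ Y, ∑ x ∈ Y.erase y, Fp (∑ i, x i * y i) = 3 * N - 36 := by
    intro y hy
    have hyy : Fp (∑ i, y i * y i) = 36 := by
      have : (∑ i, y i * y i) = 1 := by
        have := hunit y hy
        simpa [sq] using this
      rw [this]; unfold Fp; norm_num
    have h3 := Finset.add_sum_erase Y (fun x => Fp (∑ i, x i * y i)) hy
    rw [key y hy] at h3
    simp only at h3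
    linarith [hyy]
  constructor
  · -- N = 12 → inner products constrained
    intro hcard x hx y hy hxy
    have h0 : ∑ x ∈ Y.erase y, Fp (∑ i, x i * y i) = 0 := by
      rw [key2 y hy, hcard]; norm_num
    have hall := (Finset.sum_eq_zero_iff_of_nonneg
      (fun z _ => Fp_nonneg (∑ i, z i * y i))).1 h0
    have hxmem : x ∈ Y.erase y := Finset.mem_erase.2 ⟨hxy, hx⟩
    have := (Fp_eq_zero_iff _).1 (hall x hxmem)
    rcases this with h | h | h
    · exact Or.inr (Or.inl h)
    · exact Or.inr (Or.inr h)
    · exact Or.inl h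
  · -- inner products constrained → N = 12
    intro hip
    obtain ⟨y, hy⟩ := hne
    have h0 : ∑ x ∈ Y.erase y, Fp (∑ i, x i * y i) = 0 := by
      apply Finset.sum_eq_zero
      intro x hx
      obtain ⟨hxy, hxY⟩ := Finset.mem_erase.1 hx
      rcases hip x hxY y hy hxy with h | h | h
      · exact (Fp_eq_zero_iff _).2 (Or.inr (Or.inr h))
      · exact (Fp_eq_zero_iff _).2 (Or.inl h)
      · exact (Fp_eq_zero_iff _).2 (Or.inr (Or.inl h))
    have := key2 y hy
    rw [h0] at this
    have hN12 : (N : ℝ) = 12 := by linarith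
    exact_mod_cast hN12
end

section
/- Every half set of the normalized D₄ root system is a spherical {10,4,2}-design with 12 points on S³: if X′ ⊆ (1/√2)(D₄)₂ is such that for every x ∈ (1/√2)(D₄)₂ exactly one of x and −x belongs to X′, then |X′| = 12 and ∑_{x∈X′} P(x) = 0 for every harmonic polynomial P of degree ℓ for each ℓ ∈ {10, 4, 2}. -/
/-!
The D₄ roots form an antipodal set and polynomials of even degree are even functions, so a half
set carries exactly half of the sum over all 24 roots; and since the normalization only rescales
a homogeneous polynomial, it suffices that `∑_{y ∈ (D₄)₂} P(y) = 0` for harmonic `P` of degree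
2, 4 and 10.

For this we use duality with the Laplacian. A linear functional on forms of degree `ℓ` vanishes
on the harmonic ones iff it factors as `Q ↦ G(ΔQ)` for a functional `G` on forms of degree
`ℓ - 2`; in terms of the values `g` of `G` on monomials, iff the moments satisfy
`∑_y y^a = ∑_j a_j (a_j - 1) g(a - 2e_j)` for all exponents `|a| = ℓ`. For D₄ we exhibit `g`
and check these identities by computation.
-/

open MvPolynomial

/-- The shell `{x ∈ ℤ^d : x₁² + ⋯ + x_d² = n}` as a `Finset`.  (The bounding box
`Finset.Icc` is harmless: any integer solution satisfies `|x i| ≤ x i ^ 2 ≤ n`.) -/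
noncomputable def intShell (d n : ℕ) : Finset (Fin d → ℤ) :=
  (Finset.Icc (fun _ => -(n : ℤ)) (fun _ => (n : ℤ))).filter
    (fun x => ∑ i, x i ^ 2 = (n : ℤ))

/-- The normalized `D₄` root system `(1/√2)·(D₄)₂ ⊆ S³` (for `n = 2`), where
`(D₄)₂ = {x ∈ ℤ⁴ : x₁²+⋯+x₄² = 2}`. -/
def normShell (d n : ℕ) : Set (EuclideanSpace ℝ (Fin d)) :=
  {x | ∃ y ∈ intShell d n, ∀ i, x i = (y i : ℝ) / Real.sqrt n}


theorem MvPolynomial.IsHomogeneous.eval_smul {σ R : Type*} [Fintype σ] [CommSemiring R]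
    {P : MvPolynomial σ R} {n : ℕ} (hP : P.IsHomogeneous n) (c : R) (x : σ → R) :
    eval (c • x) P = c ^ n * eval x P := by
  rw [eval_eq', eval_eq', Finset.mul_sum]
  refine Finset.sum_congr rfl fun d hd => ?_
  have hdeg : ∑ i, d i = n := by
    rw [← Finsupp.degree_eq_sum, Finsupp.degree_eq_weight_one]; exact hP (mem_support_iff.mp hd)
  simp only [Pi.smul_apply, smul_eq_mul, mul_pow, Finset.prod_mul_distrib,
    Finset.prod_pow_eq_pow_sum, hdeg]
  ring

theorem MvPolynomial.IsHomogeneous.eval_neg {σ R : Type*} [Fintype σ] [CommRing R]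
    {P : MvPolynomial σ R} {n : ℕ} (hP : P.IsHomogeneous n) (hn : Even n) (x : σ → R) :
    eval (-x) P = eval x P := by
  rw [← neg_one_smul R x, hP.eval_smul, hn.neg_one_pow, one_mul]

section HalfSet

open Pointwise

variable {E : Type*} [InvolutiveNeg E] [DecidableEq E] {N X : Finset E}

theorem Finset.disjoint_neg_of_forall_xor (hsub : X ⊆ N)
    (hhalf : ∀ x ∈ N, Xor (x ∈ X) (-x ∈ X)) : Disjoint X (-X) := by
  rw [Finset.disjoint_left]
  intro x hx hnx
  rw [Finset.mem_neg'] at hnx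
  rcases hhalf x (hsub hx) with ⟨-, h⟩ | ⟨-, h⟩
  exacts [h hnx, h hx]

theorem Finset.union_neg_eq_of_forall_xor (hN : ∀ x ∈ N, -x ∈ N) (hsub : X ⊆ N)
    (hhalf : ∀ x ∈ N, Xor (x ∈ X) (-x ∈ X)) : X ∪ -X = N := by
  ext x
  rw [Finset.mem_union, Finset.mem_neg']
  refine ⟨?_, fun hx => (hhalf x hx).or⟩
  rintro (hx | hx)
  · exact hsub hx
  · simpa using hN _ (hsub hx)

theorem Finset.card_eq_two_mul_of_forall_xor (hN : ∀ x ∈ N, -x ∈ N) (hsub : X ⊆ N)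
    (hhalf : ∀ x ∈ N, Xor (x ∈ X) (-x ∈ X)) : N.card = 2 * X.card := by
  rw [← Finset.union_neg_eq_of_forall_xor hN hsub hhalf,
    Finset.card_union_of_disjoint (Finset.disjoint_neg_of_forall_xor hsub hhalf),
    Finset.card_neg, two_mul]

theorem Finset.sum_eq_two_mul_of_forall_xor {M : Type*} [AddCommMonoid M] {f : E → M}
    (hf : ∀ x, f (-x) = f x) (hN : ∀ x ∈ N, -x ∈ N) (hsub : X ⊆ N)
    (hhalf : ∀ x ∈ N, Xor (x ∈ X) (-x ∈ X)) : ∑ x ∈ N, f x = 2 • ∑ x ∈ X, f x := by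
  rw [← Finset.union_neg_eq_of_forall_xor hN hsub hhalf,
    Finset.sum_union (Finset.disjoint_neg_of_forall_xor hsub hhalf), Finset.sum_neg_index]
  simp only [hf, two_nsmul]

end HalfSet

section LaplacianDual

variable {d : ℕ}

noncomputable def laplacian : MvPolynomial (Fin d) ℝ →ₗ[ℝ] MvPolynomial (Fin d) ℝ :=
  ∑ j, (pderiv j).toLinearMap ∘ₗ (pderiv j).toLinearMap

theorem laplacian_apply (P : MvPolynomial (Fin d) ℝ) :
    laplacian P = ∑ j, pderiv j (pderiv j P) := by
  simp [laplacian]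

theorem laplacian_monomial (a : Fin d →₀ ℕ) :
    laplacian (monomial a 1) =
      ∑ j, monomial (a - Finsupp.single j 2) ((a j * (a j - 1) : ℕ) : ℝ) := by
  rw [laplacian_apply]
  refine Finset.sum_congr rfl fun j _ => ?_
  rw [pderiv_monomial, pderiv_monomial, tsub_tsub, ← Finsupp.single_add, Finsupp.tsub_apply,
    Finsupp.single_eq_same]
  push_cast
  ring_nf

noncomputable def monomialFunctional (g : (Fin d →₀ ℕ) → ℝ) : MvPolynomial (Fin d) ℝ →ₗ[ℝ] ℝ :=
  (basisMonomials (Fin d) ℝ).constr ℝ g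

theorem monomialFunctional_monomial (g : (Fin d →₀ ℕ) → ℝ) (a : Fin d →₀ ℕ) (c : ℝ) :
    monomialFunctional g (monomial a c) = c * g a := by
  have h : monomial a c = c • basisMonomials (Fin d) ℝ a := by
    rw [coe_basisMonomials, smul_monomial, smul_eq_mul, mul_one]
  rw [h, map_smul, monomialFunctional, Module.Basis.constr_basis, smul_eq_mul]

theorem monomialFunctional_laplacian_monomial (g : (Fin d →₀ ℕ) → ℝ) (a : Fin d →₀ ℕ) :
    monomialFunctional g (laplacian (monomial a 1)) =
      ∑ j, ((a j * (a j - 1) : ℕ) : ℝ) * g (a - Finsupp.single j 2) := by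
  simp only [laplacian_monomial, map_sum, monomialFunctional_monomial]

theorem sum_eval_eq_monomialFunctional_laplacian {ι : Type*} (s : Finset ι)
    (v : ι → Fin d → ℝ) (g : (Fin d →₀ ℕ) → ℝ) {ℓ : ℕ}
    (hmoment : ∀ a : Fin d →₀ ℕ, a.degree = ℓ →
      ∑ i ∈ s, ∏ k, v i k ^ a k = ∑ j, ((a j * (a j - 1) : ℕ) : ℝ) * g (a - Finsupp.single j 2))
    {P : MvPolynomial (Fin d) ℝ} (hP : P.IsHomogeneous ℓ) :
    ∑ i ∈ s, eval (v i) P = monomialFunctional g (laplacian P) := by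
  rw [P.as_sum, map_sum, map_sum]
  simp only [map_sum]
  rw [Finset.sum_comm]
  refine Finset.sum_congr rfl fun a ha => ?_
  have hdeg : a.degree = ℓ := by
    rw [Finsupp.degree_eq_weight_one]; exact hP (mem_support_iff.mp ha)
  rw [← mul_one (coeff a P), ← smul_eq_mul, ← smul_monomial, map_smul, map_smul,
    monomialFunctional_laplacian_monomial, ← hmoment a hdeg, Finset.smul_sum]
  simp only [smul_eval, eval_monomial, Finsupp.prod_fintype _ _ (fun _ => pow_zero _), one_mul,
    smul_eq_mul]

theorem sum_eval_eq_zero_of_isHarmonic {ι : Type*} (s : Finset ι)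
    (v : ι → Fin d → ℝ) (g : (Fin d →₀ ℕ) → ℝ) {ℓ : ℕ}
    (hmoment : ∀ a : Fin d →₀ ℕ, a.degree = ℓ →
      ∑ i ∈ s, ∏ k, v i k ^ a k = ∑ j, ((a j * (a j - 1) : ℕ) : ℝ) * g (a - Finsupp.single j 2))
    {P : MvPolynomial (Fin d) ℝ} (hP : IsHarmonic ℓ P) : ∑ i ∈ s, eval (v i) P = 0 := by
  rw [sum_eval_eq_monomialFunctional_laplacian s v g hmoment hP.1, laplacian_apply, hP.2, map_zero]

end LaplacianDual

namespace D4

def roots : List (Fin 4 → ℤ) :=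
  [![1, 1, 0, 0], ![1, -1, 0, 0], ![-1, 1, 0, 0], ![-1, -1, 0, 0],
   ![1, 0, 1, 0], ![1, 0, -1, 0], ![-1, 0, 1, 0], ![-1, 0, -1, 0],
   ![1, 0, 0, 1], ![1, 0, 0, -1], ![-1, 0, 0, 1], ![-1, 0, 0, -1],
   ![0, 1, 1, 0], ![0, 1, -1, 0], ![0, -1, 1, 0], ![0, -1, -1, 0],
   ![0, 1, 0, 1], ![0, 1, 0, -1], ![0, -1, 0, 1], ![0, -1, 0, -1],
   ![0, 0, 1, 1], ![0, 0, 1, -1], ![0, 0, -1, 1], ![0, 0, -1, -1]]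

set_option maxHeartbeats 1000000 in
theorem intShell_four_two : intShell 4 2 = roots.toFinset := by decide

theorem roots_nodup : roots.Nodup := by decide

/-- `225 • g` for the weight `g` of `sum_eval_eq_monomialFunctional_laplacian` for the D₄ roots
in degrees `ℓ = 2, 4, 10`, which lives on exponents of degree `ℓ - 2 = 0, 2, 8`. It vanishes
unless `b = 2c`, and for `|c| = 4` depends only on the partition of `c`, which `∑ cᵢ²`
determines. -/
def dualWeight (b : Fin 4 → ℕ) : ℤ :=
  if ∀ i, b i % 2 = 0 then
    match ∑ i, b i / 2, ∑ i, (b i / 2) ^ 2 with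
    | 0, _ => 1350
    | 1, _ => 225
    | 4, 16 => 30
    | 4, 10 => 15
    | 4, 8 => 24
    | 4, 6 => -2
    | 4, 4 => 1
    | _, _ => 0
  else 0

set_option maxHeartbeats 4000000 in
set_option maxRecDepth 100000 in
theorem moment_eq_sum_dualWeight : ∀ ℓ ∈ [2, 4, 10], ∀ a ∈ Finset.Nat.antidiagonalTuple 4 ℓ,
    225 * (roots.map fun y => ∏ i, y i ^ a i).sum =
      ∑ j, ((a j * (a j - 1) : ℕ) : ℤ) * dualWeight (a - Pi.single j 2) := by
  decide

theorem sum_prod_pow_intShell {a : Fin 4 →₀ ℕ} (ha : a.degree ∈ ({10, 4, 2} : Set ℕ)) :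
    ∑ y ∈ intShell 4 2, ∏ k, ((y k : ℤ) : ℝ) ^ a k =
      ∑ j, ((a j * (a j - 1) : ℕ) : ℝ) *
        ((dualWeight ⇑(a - Finsupp.single j 2 : Fin 4 →₀ ℕ) : ℝ) / 225) := by
  have h := moment_eq_sum_dualWeight a.degree (by simpa [or_comm, or_left_comm] using ha) ⇑a
    (Finset.Nat.mem_antidiagonalTuple.mpr (Finsupp.degree_eq_sum a).symm)
  simp only [Finsupp.coe_tsub, Finsupp.single_eq_pi_single]
  rw [intShell_four_two, List.sum_toFinset _ roots_nodup]
  simp only [← mul_div_assoc, ← Finset.sum_div]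
  rw [eq_div_iff (by norm_num), mul_comm]
  have h' := congrArg (Int.cast : ℤ → ℝ) h
  push_cast [Int.cast_list_sum, List.map_map, Function.comp_def] at h' ⊢
  exact h'

theorem card_intShell : (intShell 4 2).card = 24 := by
  rw [intShell_four_two, List.toFinset_card_of_nodup roots_nodup]
  rfl

theorem sum_eval_intShell_eq_zero {ℓ : ℕ} (hℓ : ℓ ∈ ({10, 4, 2} : Set ℕ))
    {P : MvPolynomial (Fin 4) ℝ} (hP : IsHarmonic ℓ P) :
    ∑ y ∈ intShell 4 2, eval (fun i => (y i : ℝ)) P = 0 :=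
  sum_eval_eq_zero_of_isHarmonic _ _ (fun b => (dualWeight ⇑b : ℝ) / 225)
    (fun _ ha => sum_prod_pow_intShell (ha ▸ hℓ)) hP

end D4

section NormalizedShell

variable {d n : ℕ}

theorem neg_mem_intShell {y : Fin d → ℤ} (hy : y ∈ intShell d n) : -y ∈ intShell d n := by
  simp only [intShell, Finset.mem_filter, Finset.mem_Icc, Pi.le_def] at hy ⊢
  obtain ⟨⟨hlow, hup⟩, hsq⟩ := hy
  refine ⟨⟨fun i => ?_, fun i => ?_⟩, ?_⟩
  · have := hup i; simp only [Pi.neg_apply]; omega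
  · have := hlow i; simp only [Pi.neg_apply]; omega
  · simpa only [Pi.neg_apply, neg_sq] using hsq

noncomputable def normalizeEmbedding (hn : n ≠ 0) : (Fin d → ℤ) ↪ EuclideanSpace ℝ (Fin d) where
  toFun y := WithLp.toLp 2 fun i => (y i : ℝ) / Real.sqrt n
  inj' y z h := by
    funext i
    have hi := congrArg (fun x : EuclideanSpace ℝ (Fin d) => x i) h
    have hsqrt : Real.sqrt n ≠ 0 := by positivity
    simpa [div_left_inj' hsqrt] using hi

@[simp]
theorem normalizeEmbedding_apply (hn : n ≠ 0) (y : Fin d → ℤ) (i : Fin d) :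
    normalizeEmbedding hn y i = (y i : ℝ) / Real.sqrt n :=
  rfl

theorem normShell_eq_map (hn : n ≠ 0) :
    normShell d n = ↑((intShell d n).map (normalizeEmbedding hn)) := by
  ext x
  simp only [normShell, Set.mem_ofPred_eq, Finset.coe_map, Set.mem_image, Finset.mem_coe]
  refine exists_congr fun y => and_congr_right fun _ => ⟨fun h => ?_, fun h i => by simp [← h]⟩
  ext i
  simp [h]

theorem neg_mem_map_normalizeEmbedding (hn : n ≠ 0) {x : EuclideanSpace ℝ (Fin d)}
    (hx : x ∈ (intShell d n).map (normalizeEmbedding hn)) :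
    -x ∈ (intShell d n).map (normalizeEmbedding hn) := by
  obtain ⟨y, hy, rfl⟩ := Finset.mem_map.mp hx
  refine Finset.mem_map.mpr ⟨-y, neg_mem_intShell hy, ?_⟩
  ext i
  simp [neg_div]

theorem eval_normalizeEmbedding (hn : n ≠ 0) {ℓ : ℕ} {P : MvPolynomial (Fin d) ℝ}
    (hP : P.IsHomogeneous ℓ) (y : Fin d → ℤ) :
    eval (fun i => normalizeEmbedding hn y i) P =
      (Real.sqrt n)⁻¹ ^ ℓ * eval (fun i => (y i : ℝ)) P := by
  rw [← hP.eval_smul]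
  congr 2
  funext i
  simp [div_eq_inv_mul]

end NormalizedShell

/-- Every half set of the normalized `D₄` root system is a spherical
`{10,4,2}`-design with 12 points on `S³`: if `X′ ⊆ (1/√2)(D₄)₂` contains exactly one of
`x, −x` for every `x ∈ (1/√2)(D₄)₂`, then `|X′| = 12` and every harmonic polynomial of
degree `ℓ ∈ {10,4,2}` sums to zero over `X′`. -/
theorem half_set_of_D4_roots_is_design (X' : Finset (EuclideanSpace ℝ (Fin 4)))
    (hsub : (X' : Set (EuclideanSpace ℝ (Fin 4))) ⊆ normShell 4 2)
    (hhalf : ∀ x ∈ normShell 4 2, Xor' (x ∈ X') (-x ∈ X')) :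
    X'.card = 12 ∧
      ∀ ℓ ∈ ({10, 4, 2} : Set ℕ), ∀ P : MvPolynomial (Fin 4) ℝ, IsHarmonic ℓ P →
        ∑ x ∈ X', eval (fun i => x i) P = 0 := by
  set N := (intShell 4 2).map (normalizeEmbedding two_ne_zero)
  rw [normShell_eq_map two_ne_zero, Finset.coe_subset] at hsub
  rw [normShell_eq_map two_ne_zero] at hhalf
  have hanti : ∀ x ∈ N, -x ∈ N := fun _ => neg_mem_map_normalizeEmbedding two_ne_zero
  refine ⟨?_, fun ℓ hℓ P hP => ?_⟩
  · have hcard := Finset.card_eq_two_mul_of_forall_xor hanti hsub hhalf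
    rw [Finset.card_map, D4.card_intShell] at hcard
    omega
  · have hℓ_even : Even ℓ := by rcases hℓ with rfl | rfl | rfl <;> decide
    have heven (x : EuclideanSpace ℝ (Fin 4)) :
        eval (fun i => (-x) i) P = eval (fun i => x i) P :=
      hP.1.eval_neg hℓ_even _
    have hsum := Finset.sum_eq_two_mul_of_forall_xor
      (f := fun x : EuclideanSpace ℝ (Fin 4) => eval (fun i => x i) P) heven hanti hsub hhalf
    rw [Finset.sum_map] at hsum
    simp only [eval_normalizeEmbedding two_ne_zero hP.1, ← Finset.mul_sum,
      D4.sum_eval_intShell_eq_zero hℓ hP, mul_zero] at hsum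
    simpa using hsum.symm
end

section
/- Every shell of the D₄ lattice decomposes into orthogonal transformations of the D₄ root system: for every positive integer m there exist finitely many linear isometries σ₁, …, σ_k of ℝ⁴ such that the normalized shell (1/√(2m))(D₄)_{2m} ⊆ S³ is the disjoint union of the sets σ₁((1/√2)(D₄)₂), …, σ_k((1/√2)(D₄)₂). -/
open Quaternion

theorem Setoid.exists_fin_partition {α : Type*} (s : Setoid α) {S : Set α} (hS : S.Finite)
    (hsat : ∀ x ∈ S, ∀ y, s x y → y ∈ S) :
    ∃ (k : ℕ) (r : Fin k → α), (∀ j, r j ∈ S) ∧ S = ⋃ j, {y | s (r j) y} ∧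
      ∀ j j', j ≠ j' → Disjoint {y | s (r j) y} {y | s (r j') y} := by
  have := hS.to_subtype
  let t : Setoid S := s.comap Subtype.val
  let e := Finite.equivFin (Quotient t)
  refine ⟨_, fun j => (e.symm j).out.1, fun j => (e.symm j).out.2, ?_,
    fun j j' hne => Set.disjoint_left.mpr ?_⟩
  · ext y
    simp only [Set.mem_iUnion]
    constructor
    · intro hy
      refine ⟨e ⟦⟨y, hy⟩⟧, ?_⟩
      rw [e.symm_apply_apply]
      exact Quotient.mk_out (s := t) ⟨y, hy⟩
    · rintro ⟨j, hj⟩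
      exact hsat _ (e.symm j).out.2 y hj
  · intro y hj hj'
    refine hne (e.symm.injective ?_)
    rw [← Quotient.out_eq (e.symm j), ← Quotient.out_eq (e.symm j')]
    exact Quotient.sound (s.trans hj (s.symm hj'))

lemma mem_intShell {d n : ℕ} {y : Fin d → ℤ} : y ∈ intShell d n ↔ ∑ i, y i ^ 2 = n := by
  refine ⟨fun h => (Finset.mem_filter.mp h).2, fun h => Finset.mem_filter.mpr ⟨?_, h⟩⟩
  have hle (i : Fin d) : y i ^ 2 ≤ n :=
    h ▸ Finset.single_le_sum (fun j _ => sq_nonneg (y j)) (Finset.mem_univ i)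
  refine Finset.mem_Icc.mpr ⟨fun i => ?_, fun i => ?_⟩ <;> dsimp only <;>
    nlinarith [hle i, sq_nonneg (y i + 1), sq_nonneg (y i - 1)]

namespace Quaternion

variable {R S : Type*} [CommRing R] [CommRing S]

@[simps]
def mapRingHom (f : R →+* S) : ℍ[R] →+* ℍ[S] where
  toFun q := ⟨f q.re, f q.imI, f q.imJ, f q.imK⟩
  map_one' := by ext <;> simp
  map_mul' x y := by
    change (⟨_, _, _, _⟩ : ℍ[S]) = (⟨_, _, _, _⟩ : ℍ[S]) * ⟨_, _, _, _⟩
    ext <;> simp <;> ring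
  map_zero' := by ext <;> simp
  map_add' x y := by ext <;> simp <;> rfl

lemma normSq_mapRingHom (f : R →+* S) (q : ℍ[R]) : normSq (mapRingHom f q) = f (normSq q) := by
  simp [normSq_def']

lemma mapRingHom_injective {f : R →+* S} (hf : Function.Injective f) :
    Function.Injective (mapRingHom f) := fun x y h => by
  ext <;> apply hf
  exacts [congrArg QuaternionAlgebra.re h, congrArg QuaternionAlgebra.imI h,
    congrArg QuaternionAlgebra.imJ h, congrArg QuaternionAlgebra.imK h]

lemma normSq_eq_sum_equivTuple (q : ℍ[R]) : normSq q = ∑ i, equivTuple R q i ^ 2 := by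
  simp [normSq_def', Fin.sum_univ_four]

noncomputable def mulLeftIsometry (u : ℍ) (hu : ‖u‖ = 1) :
    EuclideanSpace ℝ (Fin 4) ≃ₗᵢ[ℝ] EuclideanSpace ℝ (Fin 4) :=
  linearIsometryEquivTuple.symm.trans <|
    (LinearIsometry.toLinearIsometryEquiv
      ⟨LinearMap.mulLeft ℝ u, fun x => by simp [hu]⟩ rfl).trans linearIsometryEquivTuple

lemma mulLeftIsometry_apply (u : ℍ) (hu : ‖u‖ = 1) (q : ℍ) :
    mulLeftIsometry u hu (linearIsometryEquivTuple q) = linearIsometryEquivTuple (u * q) :=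
  congrArg linearIsometryEquivTuple <|
    congrArg (u * ·) (linearIsometryEquivTuple.symm_apply_apply q)

end Quaternion

namespace IntQuaternion

def SameParity (w : ℍ[ℤ]) : Prop :=
  w.imI % 2 = w.re % 2 ∧ w.imJ % 2 = w.re % 2 ∧ w.imK % 2 = w.re % 2

lemma exists_eq_two_smul_of_mapRingHom_eq_zero {q : ℍ[ℤ]}
    (hq : mapRingHom (Int.castRingHom (ZMod 2)) q = 0) : ∃ z : ℍ[ℤ], q = (2 : ℤ) • z := by
  have hdvd (a : ℤ) (ha : (a : ZMod 2) = 0) : (2 : ℤ) ∣ a :=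
    (ZMod.intCast_zmod_eq_zero_iff_dvd a 2).mp ha
  obtain ⟨a, ha⟩ := hdvd _ (congrArg QuaternionAlgebra.re hq)
  obtain ⟨b, hb⟩ := hdvd _ (congrArg QuaternionAlgebra.imI hq)
  obtain ⟨c, hc⟩ := hdvd _ (congrArg QuaternionAlgebra.imJ hq)
  obtain ⟨d, hd⟩ := hdvd _ (congrArg QuaternionAlgebra.imK hq)
  exact ⟨⟨a, b, c, d⟩, by ext <;> simp [ha, hb, hc, hd] <;> rfl⟩

lemma zmod_two_mk_mul_mk_eq_zero (a b c d e : ZMod 2) (h : a + b + c + d = 0) :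
    (⟨a, b, c, d⟩ : ℍ[ZMod 2]) * ⟨e, e, e, e⟩ = 0 := by
  ext <;> simp <;> revert a b c d e <;> decide

lemma exists_mul_eq_two_smul_of_sameParity {x w : ℍ[ℤ]}
    (hx : Even (x.re + x.imI + x.imJ + x.imK)) (hw : SameParity w) :
    ∃ z : ℍ[ℤ], x * w = (2 : ℤ) • z := by
  apply exists_eq_two_smul_of_mapRingHom_eq_zero
  have hcast (a b : ℤ) (h : a % 2 = b % 2) : (a : ZMod 2) = b :=
    (ZMod.intCast_eq_intCast_iff' a b 2).mpr h
  have hw' : mapRingHom (Int.castRingHom (ZMod 2)) w = ⟨w.re, w.re, w.re, w.re⟩ := by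
    ext <;> simp [hcast _ _ hw.1, hcast _ _ hw.2.1, hcast _ _ hw.2.2]
  rw [map_mul, hw']
  apply zmod_two_mk_mul_mk_eq_zero
  simpa using (ZMod.intCast_zmod_eq_zero_iff_dvd _ 2).mpr (even_iff_two_dvd.mp hx)

lemma sq_emod_four (a : ℤ) : a ^ 2 % 4 = a % 2 := by
  obtain ⟨k, rfl | rfl⟩ := Int.even_or_odd' a <;> ring_nf <;> omega

lemma sameParity_of_normSq_eq_four {w : ℍ[ℤ]} (hw : normSq w = 4) : SameParity w := by
  rw [normSq_def'] at hw
  have := sq_emod_four w.re; have := sq_emod_four w.imI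
  have := sq_emod_four w.imJ; have := sq_emod_four w.imK
  have := sq_nonneg w.re; have := sq_nonneg w.imI
  have := sq_nonneg w.imJ; have := sq_nonneg w.imK
  unfold SameParity
  omega

lemma even_coordSum_of_even_normSq {x : ℍ[ℤ]} (hx : Even (normSq x)) :
    Even (x.re + x.imI + x.imJ + x.imK) := by
  simpa [normSq_def', Int.even_add, parity_simps] using hx

lemma exists_mul_eq_two_smul {x w : ℍ[ℤ]} (hx : Even (normSq x)) (hw : normSq w = 4) :
    ∃ z : ℍ[ℤ], x * w = (2 : ℤ) • z :=
  exists_mul_eq_two_smul_of_sameParity (even_coordSum_of_even_normSq hx)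
    (sameParity_of_normSq_eq_four hw)

lemma normSq_eq_of_two_smul_eq_mul {x w z : ℍ[ℤ]} (hw : normSq w = 4)
    (h : (2 : ℤ) • z = x * w) : normSq z = normSq x := by
  have := congrArg normSq h
  rw [normSq_smul, map_mul, hw] at this
  linarith

/-- `w` ranges over twice the 24 Hurwitz units, so this says `y = x * u` for a Hurwitz unit `u`. -/
def HurwitzAssociated (x y : ℍ[ℤ]) : Prop :=
  ∃ w : ℍ[ℤ], normSq w = 4 ∧ (2 : ℤ) • y = x * w

lemma two_smul_injective : Function.Injective fun q : ℍ[ℤ] => (2 : ℤ) • q :=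
  smul_right_injective _ two_ne_zero

lemma HurwitzAssociated.refl (x : ℍ[ℤ]) : HurwitzAssociated x x :=
  ⟨2, rfl, by rw [← mul_coe_eq_smul]; rfl⟩

lemma HurwitzAssociated.symm {x y : ℍ[ℤ]} (h : HurwitzAssociated x y) :
    HurwitzAssociated y x := by
  obtain ⟨w, hw, hxy⟩ := h
  refine ⟨star w, by rw [normSq_star, hw], two_smul_injective ?_⟩
  calc (2 : ℤ) • (2 : ℤ) • x = x * (w * star w) := by
        rw [self_mul_star, hw, mul_coe_eq_smul, smul_smul]; rfl
    _ = (2 : ℤ) • (y * star w) := by rw [← mul_assoc, ← hxy, smul_mul_assoc]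

lemma HurwitzAssociated.trans {x y z : ℍ[ℤ]} (hxy : HurwitzAssociated x y)
    (hyz : HurwitzAssociated y z) : HurwitzAssociated x z := by
  obtain ⟨w, hw, hxy⟩ := hxy
  obtain ⟨w', hw', hyz⟩ := hyz
  obtain ⟨u, hu⟩ := exists_mul_eq_two_smul (by rw [hw]; decide) hw'
  refine ⟨u, by rw [normSq_eq_of_two_smul_eq_mul hw' hu.symm, hw], two_smul_injective ?_⟩
  calc (2 : ℤ) • (2 : ℤ) • z = x * (w * w') := by
        rw [hyz, ← smul_mul_assoc, hxy, mul_assoc]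
    _ = (2 : ℤ) • (x * u) := by rw [hu, mul_smul_comm]

lemma normSq_eq_of_hurwitzAssociated {x y : ℍ[ℤ]} (h : HurwitzAssociated x y) :
    normSq y = normSq x :=
  let ⟨_, hw, hxy⟩ := h
  normSq_eq_of_two_smul_eq_mul hw hxy

def onePlusI : ℍ[ℤ] := ⟨1, 1, 0, 0⟩

lemma normSq_onePlusI : normSq onePlusI = 2 := rfl

lemma exists_normSq_two_onePlusI_mul_eq {w : ℍ[ℤ]} (hw : normSq w = 4) :
    ∃ v : ℍ[ℤ], normSq v = 2 ∧ onePlusI * v = w := by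
  obtain ⟨v, hv⟩ := exists_mul_eq_two_smul (x := star onePlusI) (by decide) hw
  refine ⟨v, by rw [normSq_eq_of_two_smul_eq_mul hw hv.symm, normSq_star]; rfl,
    two_smul_injective ?_⟩
  change (2 : ℤ) • (onePlusI * v) = (2 : ℤ) • w
  rw [← mul_smul_comm, ← hv, ← mul_assoc, self_mul_star, normSq_onePlusI, coe_mul_eq_smul]

lemma hurwitzAssociated_iff {x z : ℍ[ℤ]} :
    HurwitzAssociated x z ↔
      ∃ v : ℍ[ℤ], normSq v = 2 ∧ (2 : ℤ) • z = x * (onePlusI * v) := by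
  constructor
  · rintro ⟨w, hw, hz⟩
    obtain ⟨v, hv, rfl⟩ := exists_normSq_two_onePlusI_mul_eq hw
    exact ⟨v, hv, hz⟩
  · rintro ⟨v, hv, hz⟩
    exact ⟨onePlusI * v, by rw [map_mul, normSq_onePlusI, hv]; rfl, hz⟩

def hurwitzSetoid : Setoid ℍ[ℤ] :=
  ⟨HurwitzAssociated,
    ⟨HurwitzAssociated.refl, HurwitzAssociated.symm, HurwitzAssociated.trans⟩⟩

end IntQuaternion

open IntQuaternion

namespace D4Shell

abbrev toReal : ℍ[ℤ] →+* ℍ := mapRingHom (Int.castRingHom ℝ)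

lemma toReal_injective : Function.Injective toReal :=
  mapRingHom_injective Int.cast_injective

lemma norm_toReal (q : ℍ[ℤ]) : ‖toReal q‖ = √((normSq q : ℤ) : ℝ) := by
  rw [← Real.sqrt_mul_self (norm_nonneg _), ← normSq_eq_norm_mul_self, normSq_mapRingHom]
  rfl

noncomputable def rescale (n : ℕ) (q : ℍ[ℤ]) : EuclideanSpace ℝ (Fin 4) :=
  linearIsometryEquivTuple ((√n)⁻¹ • toReal q)

lemma rescale_injective {n : ℕ} (hn : n ≠ 0) : Function.Injective (rescale n) := by
  intro x y h
  have hn' : (√n)⁻¹ ≠ 0 := by positivity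
  exact toReal_injective (smul_right_injective _ hn' (linearIsometryEquivTuple.injective h))

lemma rescale_apply (n : ℕ) (q : ℍ[ℤ]) (i : Fin 4) :
    rescale n q i = (√n)⁻¹ * (equivTuple ℤ q i : ℤ) := by
  fin_cases i <;> rfl

lemma setOf_normSq_eq (n : ℕ) : {q : ℍ[ℤ] | normSq q = n} = equivTuple ℤ ⁻¹' intShell 4 n := by
  ext q
  simp [mem_intShell, normSq_eq_sum_equivTuple]

lemma finite_setOf_normSq_eq (n : ℕ) : {q : ℍ[ℤ] | normSq q = n}.Finite := by
  rw [setOf_normSq_eq]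
  exact (intShell 4 n).finite_toSet.preimage (equivTuple ℤ).injective.injOn

lemma normShell_four_eq_image (n : ℕ) : normShell 4 n = rescale n '' {q | normSq q = n} := by
  ext x
  constructor
  · rintro ⟨y, hy, hx⟩
    refine ⟨(equivTuple ℤ).symm y, ?_, PiLp.ext fun i => ?_⟩
    · rw [Set.mem_ofPred_eq, normSq_eq_sum_equivTuple, Equiv.apply_symm_apply, ← mem_intShell]
      exact hy
    · rw [rescale_apply, Equiv.apply_symm_apply, hx, div_eq_inv_mul]
  · rintro ⟨q, hq, rfl⟩
    refine ⟨equivTuple ℤ q, ?_, fun i => by rw [rescale_apply, div_eq_inv_mul]⟩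
    rwa [mem_intShell, ← normSq_eq_sum_equivTuple]

lemma toReal_mul_onePlusI_ne_zero {r : ℍ[ℤ]} (hr : r ≠ 0) : toReal (r * onePlusI) ≠ 0 :=
  (map_ne_zero_iff _ toReal_injective).mpr
    (mul_ne_zero hr (ne_of_apply_ne normSq (by rw [normSq_onePlusI, map_zero]; decide)))

noncomputable def rootIsometry (r : ℍ[ℤ]) (hr : r ≠ 0) :
    EuclideanSpace ℝ (Fin 4) ≃ₗᵢ[ℝ] EuclideanSpace ℝ (Fin 4) :=
  mulLeftIsometry _ (norm_smul_inv_norm (𝕜 := ℝ) (toReal_mul_onePlusI_ne_zero hr))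

lemma rootIsometry_rescale_two {n : ℕ} {r v z : ℍ[ℤ]} (hr : r ≠ 0) (hrn : normSq r = n)
    (hz : (2 : ℤ) • z = r * (onePlusI * v)) :
    rootIsometry r hr (rescale 2 v) = rescale n z := by
  rw [rootIsometry, rescale, rescale, mulLeftIsometry_apply]
  congr 1
  have hnorm : ‖toReal (r * onePlusI)‖ = √n * √2 := by
    rw [norm_toReal, map_mul, hrn, normSq_onePlusI, Int.cast_mul, Real.sqrt_mul (by positivity)]
    norm_num
  rw [smul_mul_smul_comm, ← map_mul, mul_assoc, ← hz, map_zsmul]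
  simp only [RCLike.ofReal_real_eq_id, id_eq, hnorm, Nat.cast_ofNat]
  match_scalars
  field_simp
  rw [Real.sq_sqrt zero_le_two]

lemma rootIsometry_image_normShell_two {n : ℕ} (hn : Even n) {r : ℍ[ℤ]} (hr : r ≠ 0)
    (hrn : normSq r = n) :
    rootIsometry r hr '' normShell 4 2 = rescale n '' {z | HurwitzAssociated r z} := by
  rw [normShell_four_eq_image, Set.image_image]
  ext x
  constructor
  · rintro ⟨v, hv, rfl⟩
    have hw : normSq (onePlusI * v) = 4 := by rw [map_mul, normSq_onePlusI, hv]; rfl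
    obtain ⟨z, hz⟩ := exists_mul_eq_two_smul (by rw [hrn]; exact_mod_cast hn) hw
    exact ⟨z, hurwitzAssociated_iff.mpr ⟨v, hv, hz.symm⟩,
      (rootIsometry_rescale_two hr hrn hz.symm).symm⟩
  · rintro ⟨z, hz, rfl⟩
    obtain ⟨v, hv, hvz⟩ := hurwitzAssociated_iff.mp hz
    exact ⟨v, hv, rootIsometry_rescale_two hr hrn hvz⟩

end D4Shell

open D4Shell

/-- Every shell of the `D₄` lattice decomposes into orthogonal
transformations of the `D₄` root system: for every `m ≥ 1` the normalized shell
`(1/√(2m))·(D₄)_{2m} ⊆ S³` is a disjoint union of finitely many images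
`σ₁((1/√2)(D₄)₂), …, σ_k((1/√2)(D₄)₂)` under linear isometries `σⱼ` of `ℝ⁴`. -/
theorem D4_shell_decomposition (m : ℕ) (hm : 0 < m) :
    ∃ (k : ℕ) (σ : Fin k → (EuclideanSpace ℝ (Fin 4) ≃ₗᵢ[ℝ] EuclideanSpace ℝ (Fin 4))),
      (normShell 4 (2 * m) = ⋃ j : Fin k, σ j '' normShell 4 2) ∧
      (∀ j j' : Fin k, j ≠ j' →
        Disjoint (σ j '' normShell 4 2) (σ j' '' normShell 4 2)) := by
  have hn : 2 * m ≠ 0 := by positivity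
  obtain ⟨k, r, hrn, hunion, hdisj⟩ := hurwitzSetoid.exists_fin_partition
    (finite_setOf_normSq_eq (2 * m)) fun _ hx _ hxy =>
      (normSq_eq_of_hurwitzAssociated hxy).trans hx
  have hr (j : Fin k) : r j ≠ 0 := fun h => hm.ne' (by simpa [h] using hrn j)
  refine ⟨k, fun j => rootIsometry (r j) (hr j), ?_, fun j j' hjj' => ?_⟩ <;>
    simp only [rootIsometry_image_normShell_two (even_two_mul m) (hr _) (hrn _)]
  · rw [normShell_four_eq_image, hunion, Set.image_iUnion]
    rfl
  · exact (Set.disjoint_image_iff (rescale_injective hn)).mpr (hdisj j j' hjj')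
end
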